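/- arXiv:1401.2536 — 2 statements merged into one kernel-verified Lean document; each statement's English description precedes it below -/
import Mathlib

section
/- Let X be a metric space, S a family of subsets, ζ : S → [0,∞] a size function, μ a Borel regular (outer) measure on X, A ⊆ X, and t > 0. Suppose the covering relation C_{μ,ζ} (pairs (x,S) with x ∈ S ∈ S_{μ,ζ}) is fine at every point of A, and the Federer density satisfies F^ζ(μ,x) < t for all x ∈ A. Then μ(E) ≤ t · ψ_ζ(E) for every E ⊆ A. -/
open Set Metric MeasureTheory ENNReal Filter Topology

variable {X : Type*}

section Defs
variable [MetricSpace X] [MeasurableSpace X]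

/-- The `δ`-approximating pre-measure `ζ_δ` of the Carathéodory construction built from a
family of sets `S` and a size function `ζ`: the infimum of `∑_j ζ(E_j)` over countable
covers of `R` by members `E_j ∈ S` of diameter at most `δ`. -/
noncomputable def caraPre (S : Set (Set X)) (ζ : Set X → ℝ≥0∞) (δ : ℝ≥0∞) (R : Set X) : ℝ≥0∞ :=
  ⨅ (E : ℕ → Set X) (_ : ∀ n, E n ∈ S ∧ EMetric.diam (E n) ≤ δ) (_ : R ⊆ ⋃ n, E n),
    ∑' n, ζ (E n)

/-- The Carathéodory approximating measure `ψ_ζ = sup_{δ>0} ζ_δ`. -/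
noncomputable def psi (S : Set (Set X)) (ζ : Set X → ℝ≥0∞) (R : Set X) : ℝ≥0∞ :=
  ⨆ (δ : ℝ≥0∞) (_ : 0 < δ), caraPre S ζ δ R

/-- The quotient function `Q_{μ,ζ}`. -/
noncomputable def fedQuot (μ : Measure X) (ζ : Set X → ℝ≥0∞) (T : Set X) : ℝ≥0∞ :=
  if ζ T = 0 then ∞ else if ζ T = ∞ then 0 else μ T / ζ T

/-- The family `S_{μ,ζ}`: members of `S` except those on which `ζ` and `μ` both vanish or
are both infinite. -/
def adm (μ : Measure X) (S : Set (Set X)) (ζ : Set X → ℝ≥0∞) : Set (Set X) :=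
  {T ∈ S | ¬ (ζ T = 0 ∧ μ T = 0) ∧ ¬ (ζ T = ∞ ∧ μ T = ∞)}

/-- A family of sets `𝒮` covers finely at `x` (equivalently, the associated covering
relation is fine at `x`). -/
def Fine (𝒮 : Set (Set X)) (x : X) : Prop :=
  ∀ ε : ℝ≥0∞, 0 < ε → ∃ T ∈ 𝒮, x ∈ T ∧ EMetric.diam T < ε

/-- The Federer density `F^ζ(μ,x)`: the covering limsup of `Q_{μ,ζ}` over members of
`S_{μ,ζ}` containing `x` with diameter tending to `0`. -/
noncomputable def fedDensity (μ : Measure X) (S : Set (Set X)) (ζ : Set X → ℝ≥0∞) (x : X) :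
    ℝ≥0∞ :=
  ⨅ (ε : ℝ≥0∞) (_ : 0 < ε),
    ⨆ (T : Set X) (_ : T ∈ adm μ S ζ ∧ x ∈ T ∧ EMetric.diam T < ε), fedQuot μ ζ T

/-- The size function `ζ_α(T) = c_α diam(T)^α`. -/
noncomputable def sizeDiam (c : ℝ≥0∞) (α : ℝ) (T : Set X) : ℝ≥0∞ :=
  c * EMetric.diam T ^ α

/-- The enlargement `Ŝ = ⋃ {T ∈ S : T ∩ S ≠ ∅, diam T ≤ 2 diam S}`. -/
def hatSet (S : Set (Set X)) (T : Set X) : Set X :=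
  ⋃₀ {U | U ∈ S ∧ (U ∩ T).Nonempty ∧ EMetric.diam U ≤ 2 * EMetric.diam T}

/-- The doubling-type condition on the size function `ζ`: there are constants `c, η > 0`
such that every `S ∈ 𝒮` admits `S̃ ∈ 𝒮` with `Ŝ ⊆ S̃`, `diam S̃ ≤ c diam S` and
`ζ(S̃) ≤ η ζ(S)`. -/
def DoublingSize (S : Set (Set X)) (ζ : Set X → ℝ≥0∞) : Prop :=
  ∃ c η : ℝ≥0∞, 0 < c ∧ c < ∞ ∧ 0 < η ∧ η < ∞ ∧
    ∀ T ∈ S, ∃ T' ∈ S, hatSet S T ⊆ T' ∧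
      EMetric.diam T' ≤ c * EMetric.diam T ∧ ζ T' ≤ η * ζ T

end Defs

/-- The family of all closed balls (with positive radius) of a metric space. -/
def closedBallsF (X : Type*) [MetricSpace X] : Set (Set X) :=
  {T | ∃ (x : X) (r : ℝ), 0 < r ∧ T = Metric.closedBall x r}

/-- The family of all closed subsets of a metric space. -/
def closedSetsF (X : Type*) [MetricSpace X] : Set (Set X) := {T | IsClosed T}

section DefsM
variable [MetricSpace X] [MeasurableSpace X]

/-- A (outer) measure `μ` is Borel regular if every set is contained in a Borel set of the
same measure. -/
def BorelRegular (μ : Measure X) : Prop :=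
  ∀ A : Set X, ∃ B : Set X, MeasurableSet B ∧ A ⊆ B ∧ μ A = μ B

/-- There exists a countable open cover of `X` whose elements have finite `μ`-measure. -/
def SigmaFiniteOpen (μ : Measure X) : Prop :=
  ∃ U : ℕ → Set X, (∀ n, IsOpen (U n)) ∧ (⋃ n, U n) = univ ∧ ∀ n, μ (U n) < ∞

/- The Carathéodory-construction measure `ψ_ζ` as a Borel measure, via the metric
construction (sets outside the family `S` are given infinite size). -/
open Classical in
noncomputable def psiM [MeasurableSpace X] [BorelSpace X] (S : Set (Set X))
    (ζ : Set X → ℝ≥0∞) : Measure X :=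
  Measure.mkMetric' (fun T => if T ∈ S then ζ T else ∞)

/-- The upper (centered) spherical density
`Θ^{*α}(μ,x) = limsup_{r→0⁺} μ(B̄(x,r))/(c_α (2r)^α)`. -/
noncomputable def upperSphDensity (μ : Measure X) (c : ℝ≥0∞) (α : ℝ) (x : X) : ℝ≥0∞ :=
  Filter.limsup
    (fun r : ℝ => μ (Metric.closedBall x r) / (c * ENNReal.ofReal (2 * r) ^ α)) (𝓝[>] 0)

/-- `X` is diametrically regular: for all `x ∈ X`, `R > 0` there is `δ > 0` such that
`t ↦ diam B(y,t)` is continuous on `(0,δ)` for every `y ∈ B̄(x,R)`. -/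
def DiamRegular (X : Type*) [MetricSpace X] : Prop :=
  ∀ x : X, ∀ R > (0:ℝ), ∃ δ > (0:ℝ), ∀ y ∈ Metric.closedBall x R,
    ContinuousOn (fun t : ℝ => Metric.diam (Metric.ball y t)) (Ioo 0 δ)

end DefsM


/-
Fix `t < ∞`. A point `x` with `F^ζ(μ,x) < t` lies in some level set
`{x | Q_{μ,ζ}(T) < t for every T ∈ S_{μ,ζ} with x ∈ T and diam T < ε}`. If `B` lies in such a
level set and `δ < ε`, every `T ∈ S` of diameter `≤ δ` meeting `B` satisfies `μ(T) ≤ t ζ(T)`,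
so summing over a `δ`-cover gives `μ(B) ≤ t ζ_δ(B) ≤ t ψ_ζ(B)`. These level sets exhaust `E`
increasingly, and `μ` is continuous along increasing unions. For `t = ∞` one applies the finite
case on the sets `{F^ζ(μ,·) < k + 1}`: if `ψ_ζ(E) = 0`, all of them are `μ`-null.
-/

theorem measure_le_mul_of_fedQuot_lt [MeasurableSpace X] {μ : Measure X} {S : Set (Set X)}
    {ζ : Set X → ℝ≥0∞} {t : ℝ≥0∞} {T : Set X} (hT : T ∈ S) (ht₀ : t ≠ 0)
    (hq : T ∈ adm μ S ζ → fedQuot μ ζ T < t) : μ T ≤ t * ζ T := by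
  by_cases hζ : ζ T = ∞
  · simp [hζ, ENNReal.mul_top ht₀]
  by_cases hnull : ζ T = 0 ∧ μ T = 0
  · simp [hnull.2]
  have hq := hq ⟨hT, hnull, fun h => hζ h.1⟩
  rw [fedQuot] at hq
  split_ifs at hq with hζ₀
  · exact absurd hq (not_lt.mpr le_top)
  · rw [ENNReal.div_lt_iff (.inl hζ₀) (.inl hζ)] at hq
    exact hq.le

section Federer

variable [MetricSpace X] {S : Set (Set X)} {ζ : Set X → ℝ≥0∞}

theorem caraPre_mono (δ : ℝ≥0∞) : Monotone (caraPre S ζ δ) :=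
  fun _ _ h => iInf₂_mono fun _ _ => iInf_mono' fun hcov => ⟨h.trans hcov, le_rfl⟩

theorem psi_mono : Monotone (psi S ζ) :=
  fun _ _ h => iSup₂_mono fun δ _ => caraPre_mono δ h

theorem caraPre_le_psi {δ : ℝ≥0∞} (hδ : 0 < δ) (R : Set X) : caraPre S ζ δ R ≤ psi S ζ R :=
  le_iSup₂ (f := fun δ (_ : 0 < δ) => caraPre S ζ δ R) δ hδ

variable [MeasurableSpace X] {μ : Measure X} {t : ℝ≥0∞}

theorem measure_le_mul_caraPre {B : Set X} {δ : ℝ≥0∞} (ht₀ : t ≠ 0) (ht : t ≠ ∞)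
    (hB : ∀ T ∈ S, ediam T ≤ δ → (T ∩ B).Nonempty → μ T ≤ t * ζ T) :
    μ B ≤ t * caraPre S ζ δ B := by
  simp only [caraPre, ENNReal.mul_iInf_of_ne ht₀ ht, ← ENNReal.tsum_mul_left]
  refine le_iInf₂ fun F hF => le_iInf fun hcov => ?_
  calc μ B ≤ μ (⋃ n, F n ∩ B) := measure_mono fun x hx => by
        obtain ⟨n, hn⟩ := mem_iUnion.mp (hcov hx)
        exact mem_iUnion.mpr ⟨n, hn, hx⟩
    _ ≤ ∑' n, μ (F n ∩ B) := measure_iUnion_le _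
    _ ≤ ∑' n, t * ζ (F n) := ENNReal.tsum_le_tsum fun n => by
        rcases (F n ∩ B).eq_empty_or_nonempty with h | h
        · simp [h]
        · exact (measure_mono inter_subset_left).trans (hB _ (hF n).1 (hF n).2 h)

def fedQuotLevel (μ : Measure X) (S : Set (Set X)) (ζ : Set X → ℝ≥0∞) (t ε : ℝ≥0∞) : Set X :=
  {x | ∀ T ∈ adm μ S ζ, x ∈ T → ediam T < ε → fedQuot μ ζ T < t}

theorem fedQuotLevel_anti : Antitone (fedQuotLevel μ S ζ t) :=
  fun _ _ hε _ hx T hT hxT hd => hx T hT hxT (hd.trans_le hε)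

theorem exists_mem_fedQuotLevel_of_fedDensity_lt {x : X} (hx : fedDensity μ S ζ x < t) :
    ∃ n : ℕ, x ∈ fedQuotLevel μ S ζ t (n : ℝ≥0∞)⁻¹ := by
  obtain ⟨ε, hε, hsup⟩ := by simpa only [fedDensity, iInf_lt_iff] using hx
  obtain ⟨n, hn⟩ := ENNReal.exists_inv_nat_lt hε.ne'
  exact ⟨n, fun T hT hxT hd => (le_iSup₂ (f := fun T
    (_ : T ∈ adm μ S ζ ∧ x ∈ T ∧ ediam T < ε) => fedQuot μ ζ T) T
    ⟨hT, hxT, hd.trans hn⟩).trans_lt hsup⟩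

theorem measure_le_mul_psi_of_subset_fedQuotLevel {B : Set X} {ε : ℝ≥0∞} (hε : 0 < ε)
    (ht₀ : t ≠ 0) (ht : t ≠ ∞) (hB : B ⊆ fedQuotLevel μ S ζ t ε) :
    μ B ≤ t * psi S ζ B := by
  obtain ⟨δ, hδ, hδε⟩ := exists_between hε
  calc μ B ≤ t * caraPre S ζ δ B :=
        measure_le_mul_caraPre ht₀ ht fun T hT hd ⟨x, hxT, hxB⟩ =>
          measure_le_mul_of_fedQuot_lt hT ht₀ fun hadm => hB hxB T hadm hxT (hd.trans_lt hδε)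
    _ ≤ t * psi S ζ B := by gcongr; exact caraPre_le_psi hδ B

theorem measure_le_mul_psi_of_fedDensity_lt {E : Set X} (ht₀ : t ≠ 0) (ht : t ≠ ∞)
    (hE : ∀ x ∈ E, fedDensity μ S ζ x < t) : μ E ≤ t * psi S ζ E := by
  set B : ℕ → Set X := fun n => E ∩ fedQuotLevel μ S ζ t (n : ℝ≥0∞)⁻¹
  have hB : Monotone B := fun m n hmn =>
    inter_subset_inter_right E (fedQuotLevel_anti (ENNReal.inv_le_inv.mpr (by gcongr)))
  have hEB : E ⊆ ⋃ n, B n := fun x hx =>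
    mem_iUnion.mpr ((exists_mem_fedQuotLevel_of_fedDensity_lt (hE x hx)).imp fun _ => .intro hx)
  calc μ E ≤ ⨆ n, μ (B n) := (measure_mono hEB).trans_eq hB.measure_iUnion
    _ ≤ t * psi S ζ E := iSup_le fun n =>
        (measure_le_mul_psi_of_subset_fedQuotLevel (by simp) ht₀ ht inter_subset_right).trans
          (by gcongr; exact psi_mono inter_subset_left)

theorem measure_le_top_mul_psi_of_fedDensity_lt_top {E : Set X}
    (hE : ∀ x ∈ E, fedDensity μ S ζ x < ∞) : μ E ≤ ∞ * psi S ζ E := by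
  rcases eq_or_ne (psi S ζ E) 0 with hψ | hψ
  · set B : ℕ → Set X := fun k => {x ∈ E | fedDensity μ S ζ x < k + 1}
    have hB : ∀ k, μ (B k) = 0 := fun k => le_zero_iff.mp <|
      calc μ (B k) ≤ (k + 1) * psi S ζ (B k) :=
            measure_le_mul_psi_of_fedDensity_lt (by simp) (by simp) fun x hx => hx.2
        _ ≤ (k + 1) * psi S ζ E := by gcongr; exact psi_mono fun _ hx => hx.1
        _ = 0 := by rw [hψ, mul_zero]
    have hEB : E ⊆ ⋃ k, B k := fun x hx => by
      obtain ⟨k, hk⟩ := ENNReal.exists_nat_gt (hE x hx).ne_top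
      exact mem_iUnion.mpr ⟨k, hx, hk.trans (ENNReal.lt_add_right (by simp) one_ne_zero)⟩
    exact (measure_mono_null hEB (measure_iUnion_null hB)).trans_le zero_le
  · simp [ENNReal.top_mul hψ]

end Federer

theorem stmt4_general [MetricSpace X] [MeasurableSpace X]
    (μ : Measure X) (S : Set (Set X)) (ζ : Set X → ℝ≥0∞)
    (A : Set X) (t : ℝ≥0∞) (ht : 0 < t)
    (hdens : ∀ x ∈ A, fedDensity μ S ζ x < t) :
    ∀ E ⊆ A, μ E ≤ t * psi S ζ E := by
  intro E hE
  rcases eq_or_ne t ∞ with rfl | ht_top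
  · exact measure_le_top_mul_psi_of_fedDensity_lt_top fun x hx => hdens x (hE hx)
  · exact measure_le_mul_psi_of_fedDensity_lt ht.ne' ht_top fun x hx => hdens x (hE hx)

/-- Federer 2.10.17(2), revised. If `μ` is a (Borel) regular measure,
`S_{μ,ζ}` covers `A` finely and the Federer density satisfies `F^ζ(μ,x) < t` for every
`x ∈ A`, then `μ(E) ≤ t ψ_ζ(E)` for every `E ⊆ A`. -/
theorem stmt4 [MetricSpace X] [MeasurableSpace X] [BorelSpace X]
    (μ : Measure X) (hreg : BorelRegular μ) (S : Set (Set X)) (ζ : Set X → ℝ≥0∞)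
    (A : Set X) (t : ℝ≥0∞) (ht : 0 < t)
    (hfine : ∀ x ∈ A, Fine (adm μ S ζ) x)
    (hdens : ∀ x ∈ A, fedDensity μ S ζ x < t) :
    ∀ E ⊆ A, μ E ≤ t * psi S ζ E :=
  stmt4_general μ S ζ A t ht hdens
end

section
/- (Spherical area formula.) Let X be a diametrically regular metric space, α > 0, and μ a Borel regular measure on X admitting a countable open cover by sets of finite μ-measure. Let B ⊆ A ⊆ X be Borel sets such that S_{μ,ζ_{b,α}} covers A finely. Then θ^α(μ,·) is Borel on A, and if S^α(A) < ∞ and μ⌊A is absolutely continuous with respect to S^α⌊A, then μ(B) = ∫_B θ^α(μ,x) dS^α(x). -/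
open Set Metric MeasureTheory ENNReal Filter Topology

variable {X : Type*}

/-!
Write `θ` for the Federer density and `S^α` for `psiM`. Two density estimates drive the proof.
Where `θ < t`, every small ball of `S` meeting the set has `μ ≤ t ζ`, so comparing `μ` with
the Carathéodory pre-measures gives `μ ≤ t S^α`. Where `θ > t`, the small admissible balls
with `μ > t ζ` inside an open set `V` admit a Vitali disjoint subfamily; since `ζ` is doubling
on closed balls, the subfamily controls the pre-measures, giving `t S^α ≤ μ V`, and outer
regularity of `μ` lets `V` shrink to the set. Slicing `B` along `v ^ k ≤ θ < v ^ (k + 1)` then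
gives `μ B = ∫_B θ dS^α` up to a factor `v → 1`; `{θ = 0}` is `μ`-null and `{θ = ∞}` is
handled by absolute continuity.

Borel measurability: by diametric regularity an admissible ball can be enlarged slightly
without changing its diameter much, so each supremum defining `θ` at a fixed scale is lower
semicontinuous at every point that is not an atom of `μ`, and a `σ`-finite measure has only
countably many atoms.
-/

section Measurability

variable [MetricSpace X]

/-- A metric space need not be second countable: local pieces are glued along a locally finite
refinement. -/
theorem exists_isClosed_between_of_locally {ι : Type*} {S T : Set X}
    (h : ∀ x, ∃ W, IsOpen W ∧ x ∈ W ∧ ∃ C : ι → Set X,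
      (∀ i, IsClosed (C i)) ∧ (∀ i, C i ∩ W ⊆ T) ∧ S ∩ W ⊆ ⋃ i, C i) :
    ∃ F : ι × ℕ → Set X, (∀ p, IsClosed (F p)) ∧ S ⊆ ⋃ p, F p ∧ ⋃ p, F p ⊆ T := by
  choose W hWo hxW C hCcl hCT hSC using h
  obtain ⟨v, hvo, hvU, hvlf, hvW⟩ :=
    precise_refinement W hWo (iUnion_eq_univ_iff.2 fun x => ⟨x, hxW x⟩)
  choose K hKcl hKv hKU _ using fun x => (hvo x).exists_iUnion_isClosed
  refine ⟨fun p => ⋃ x, C x p.1 ∩ K x p.2, fun p => ?_, fun y hy => ?_, ?_⟩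
  · exact (hvlf.subset fun x => inter_subset_right.trans (hKv x p.2)).isClosed_iUnion
      fun x => (hCcl x p.1).inter (hKcl x p.2)
  · obtain ⟨x, hyx⟩ := iUnion_eq_univ_iff.1 hvU y
    obtain ⟨i, hi⟩ := mem_iUnion.1 (hSC x ⟨hy, hvW x hyx⟩)
    obtain ⟨n, hn⟩ := mem_iUnion.1 ((hKU x).symm ▸ hyx)
    exact mem_iUnion.2 ⟨(i, n), mem_iUnion.2 ⟨x, hi, hn⟩⟩
  · simp only [iUnion_subset_iff]
    rintro p x y ⟨hyC, hyK⟩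
    exact hCT x p.1 ⟨hyC, hvW x (hKv x p.2 hyK)⟩

theorem measurable_of_locally_iInf_lowerSemicontinuousAt [MeasurableSpace X] [BorelSpace X]
    {f : X → ℝ≥0∞} {D : Set X} (hD : D.Countable)
    (h : ∀ x₀, ∃ W, IsOpen W ∧ x₀ ∈ W ∧ ∃ g : ℕ → X → ℝ≥0∞,
      (∀ x ∈ W, f x = ⨅ k, g k x) ∧ ∀ k, ∀ x ∈ W \ D, LowerSemicontinuousAt (g k) x) :
    Measurable f := by
  refine measurable_of_Iio fun t => ?_
  obtain ⟨F, hFcl, hSF, hFT⟩ := exists_isClosed_between_of_locally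
    (ι := {p : ℕ × ℚ // ENNReal.ofReal p.2 < t}) (S := f ⁻¹' Iio t) (T := f ⁻¹' Iio t ∪ D)
    fun x₀ => by
      obtain ⟨W, hWo, hxW, g, hfg, hg⟩ := h x₀
      refine ⟨W, hWo, hxW, fun p => (interior {y | ENNReal.ofReal p.1.2 < g p.1.1 y})ᶜ,
        fun p => isOpen_interior.isClosed_compl, ?_, ?_⟩
      · rintro ⟨⟨k, q⟩, hq⟩ y ⟨hy, hyW⟩
        by_cases hyD : y ∈ D
        · exact Or.inr hyD
        have hgy : g k y ≤ ENNReal.ofReal q := not_lt.1 fun hlt =>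
          hy (mem_interior_iff_mem_nhds.2 (hg k y ⟨hyW, hyD⟩ _ hlt))
        exact Or.inl (by simpa [hfg y hyW] using (iInf_le _ k).trans_lt (hgy.trans_lt hq))
      · rintro y ⟨hy, hyW⟩
        obtain ⟨k, hk⟩ := iInf_lt_iff.1 (hfg y hyW ▸ hy : ⨅ k, g k y < t)
        obtain ⟨q, -, hkq, hqt⟩ := ENNReal.lt_iff_exists_rat_btwn.1 hk
        exact mem_iUnion.2 ⟨⟨(k, q), hqt⟩, fun hint =>
          (interior_subset (s := {y | ENNReal.ofReal q < g k y}) hint).not_gt hkq⟩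
  have hS : f ⁻¹' Iio t = (⋃ p, F p) \ (D \ f ⁻¹' Iio t) := by
    refine Subset.antisymm (fun y hy => ⟨hSF hy, fun h => h.2 hy⟩) fun y ⟨hyF, hyD⟩ => ?_
    rcases hFT hyF with hy | hy
    · exact hy
    · exact not_not.1 fun h => hyD ⟨hy, h⟩
  rw [hS]
  exact (MeasurableSet.iUnion fun p => (hFcl p).measurableSet).diff
    (hD.mono diff_subset).measurableSet

end Measurability

open Classical in
noncomputable def sizeGauge (S : Set (Set X)) (ζ : Set X → ℝ≥0∞) (T : Set X) : ℝ≥0∞ :=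
  if T ∈ S then ζ T else ∞

theorem sizeGauge_of_mem {S : Set (Set X)} {ζ : Set X → ℝ≥0∞} {T : Set X} (hT : T ∈ S) :
    sizeGauge S ζ T = ζ T :=
  if_pos hT

section Quotient

variable [MeasurableSpace X] {μ : Measure X} {S : Set (Set X)} {ζ : Set X → ℝ≥0∞} {T : Set X}
  {t : ℝ≥0∞}

theorem mul_lt_of_lt_fedQuot (hT : T ∈ adm μ S ζ) (ht : t ≠ ∞) (h : t < fedQuot μ ζ T) :
    t * ζ T < μ T := by
  unfold fedQuot at h
  split_ifs at h with h0 htop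
  · rw [h0, mul_zero]
    exact pos_iff_ne_zero.2 fun hμ => hT.2.1 ⟨h0, hμ⟩
  · exact absurd h ENNReal.not_lt_zero
  · rcases eq_or_ne (μ T) ∞ with hμ | hμ
    · rw [hμ]
      exact ENNReal.mul_lt_top ht.lt_top (lt_top_iff_ne_top.2 htop)
    · exact (ENNReal.lt_div_iff_mul_lt (Or.inl h0) (Or.inl htop)).1 h

theorem measure_le_mul_of_fedQuot_le (hT : T ∈ S) (ht0 : t ≠ 0) (ht : t ≠ ∞)
    (h : T ∈ adm μ S ζ → fedQuot μ ζ T ≤ t) : μ T ≤ t * ζ T := by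
  by_cases hadm : T ∈ adm μ S ζ
  · have hQ := h hadm
    unfold fedQuot at hQ
    split_ifs at hQ with h0 htop
    · exact absurd (top_le_iff.1 hQ) ht
    · rw [htop, ENNReal.mul_top ht0]
      exact le_top
    · exact (ENNReal.div_le_iff h0 htop).1 hQ
  · rcases not_and_or.1 fun h' => hadm ⟨hT, h'⟩ with h' | h'
    · simp [(not_not.1 h').2]
    · simp [(not_not.1 h').1, ENNReal.mul_top ht0]

theorem lt_fedQuot_of_mul_lt (ht : t ≠ ∞) (hζ : ζ T ≠ ∞) (h : t * ζ T < μ T) :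
    t < fedQuot μ ζ T := by
  unfold fedQuot
  split_ifs with h0
  · exact ht.lt_top
  · rcases eq_or_ne (μ T) ∞ with hμ | hμ
    · rw [hμ, ENNReal.top_div_of_ne_top hζ]
      exact ht.lt_top
    · exact (ENNReal.lt_div_iff_mul_lt (Or.inl h0) (Or.inl hζ)).2 h

end Quotient

section Federer

variable [MetricSpace X] [MeasurableSpace X] {μ : Measure X} {S : Set (Set X)}
  {ζ : Set X → ℝ≥0∞} {T E : Set X} {x : X} {t ε : ℝ≥0∞}

noncomputable def fedSup (μ : Measure X) (S : Set (Set X)) (ζ : Set X → ℝ≥0∞) (ε : ℝ≥0∞)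
    (x : X) : ℝ≥0∞ :=
  ⨆ (T : Set X) (_ : T ∈ adm μ S ζ ∧ x ∈ T ∧ EMetric.diam T < ε), fedQuot μ ζ T

theorem fedQuot_le_fedSup (hT : T ∈ adm μ S ζ) (hx : x ∈ T) (hd : EMetric.diam T < ε) :
    fedQuot μ ζ T ≤ fedSup μ S ζ ε x :=
  le_iSup₂ (f := fun T (_ : T ∈ adm μ S ζ ∧ x ∈ T ∧ EMetric.diam T < ε) => fedQuot μ ζ T)
    T ⟨hT, hx, hd⟩

theorem lt_fedSup_iff :
    t < fedSup μ S ζ ε x ↔ ∃ T ∈ adm μ S ζ, x ∈ T ∧ EMetric.diam T < ε ∧ t < fedQuot μ ζ T := by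
  simp [fedSup, lt_iSup_iff, and_assoc]

theorem fedSup_mono {ε' : ℝ≥0∞} (h : ε ≤ ε') : fedSup μ S ζ ε x ≤ fedSup μ S ζ ε' x :=
  iSup₂_le fun _ hT => fedQuot_le_fedSup hT.1 hT.2.1 (hT.2.2.trans_le h)

theorem fedDensity_le_fedSup (hε : 0 < ε) : fedDensity μ S ζ x ≤ fedSup μ S ζ ε x :=
  iInf₂_le ε hε

theorem fedDensity_eq_iInf_fedSup_seq {ε : ℕ → ℝ≥0∞} (hpos : ∀ k, 0 < ε k)
    (hlim : Tendsto ε atTop (𝓝 0)) : fedDensity μ S ζ x = ⨅ k, fedSup μ S ζ (ε k) x := by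
  refine le_antisymm (le_iInf fun k => fedDensity_le_fedSup (hpos k)) (le_iInf₂ fun δ hδ => ?_)
  obtain ⟨k, hk⟩ := (hlim.eventually (gt_mem_nhds hδ)).exists
  exact (iInf_le _ k).trans (fedSup_mono hk.le)

theorem exists_adm_subset_of_lt_fedDensity (h : t < fedDensity μ S ζ x) {N : Set X}
    (hN : N ∈ 𝓝 x) {ρ : ℝ≥0∞} (hρ : 0 < ρ) :
    ∃ T ∈ adm μ S ζ, x ∈ T ∧ T ⊆ N ∧ EMetric.diam T < ρ ∧ t < fedQuot μ ζ T := by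
  obtain ⟨δ, hδ, hball⟩ := EMetric.mem_nhds_iff.1 hN
  obtain ⟨T, hT, hxT, hd, hQ⟩ :=
    lt_fedSup_iff.1 (h.trans_le (fedDensity_le_fedSup (lt_min hδ hρ)))
  refine ⟨T, hT, hxT, fun y hy => hball ?_, hd.trans_le (min_le_right _ _), hQ⟩
  exact (edist_le_ediam_of_mem hy hxT).trans_lt (hd.trans_le (min_le_left _ _))

variable [BorelSpace X]

theorem psiM_eq_mkMetric' : psiM S ζ = Measure.mkMetric' (sizeGauge S ζ) := rfl

theorem apply_le_psiM_of_le_pre {ν : OuterMeasure X} {r : ℝ≥0∞} (hr : 0 < r)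
    (h : ν ≤ OuterMeasure.mkMetric'.pre (sizeGauge S ζ) r) (E : Set X) : ν E ≤ psiM S ζ E :=
  (h E).trans <| (le_iSup₂ (f := fun r (_ : 0 < r) =>
    OuterMeasure.mkMetric'.pre (sizeGauge S ζ) r) r hr E).trans (le_toMeasure_apply _
    (OuterMeasure.mkMetric'_isMetric _).le_caratheodory E)

theorem measure_le_mul_psiM_of_fedSup_le (ht0 : t ≠ 0) (ht : t ≠ ∞) (hε : 0 < ε)
    (hE : ∀ x ∈ E, fedSup μ S ζ ε x ≤ t) : μ E ≤ t * psiM S ζ E := by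
  obtain ⟨r, hr, hrε⟩ := exists_between hε
  have hle : t⁻¹ • μ.toOuterMeasure.restrict E ≤
      OuterMeasure.mkMetric'.pre (sizeGauge S ζ) r := by
    refine OuterMeasure.mkMetric'.le_pre.2 fun T hT => ?_
    rw [OuterMeasure.smul_apply, OuterMeasure.restrict_apply, smul_eq_mul,
      ENNReal.inv_mul_le_iff ht0 ht]
    by_cases hTS : T ∈ S
    swap
    · simp [sizeGauge, hTS, ENNReal.mul_top ht0]
    rcases (T ∩ E).eq_empty_or_nonempty with h0 | ⟨x, hxT, hxE⟩
    · simp [h0]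
    refine (measure_mono inter_subset_left).trans ?_
    rw [sizeGauge_of_mem hTS]
    exact measure_le_mul_of_fedQuot_le hTS ht0 ht fun hadm =>
      (fedQuot_le_fedSup hadm hxT (hT.trans_lt hrε)).trans (hE x hxE)
  have := apply_le_psiM_of_le_pre hr hle E
  rwa [OuterMeasure.smul_apply, OuterMeasure.restrict_apply, inter_self, smul_eq_mul,
    ENNReal.inv_mul_le_iff ht0 ht] at this

theorem measure_le_mul_psiM_of_fedDensity_lt (ht : t ≠ ∞)
    (hE : ∀ x ∈ E, fedDensity μ S ζ x < t) : μ E ≤ t * psiM S ζ E := by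
  rcases E.eq_empty_or_nonempty with rfl | ⟨x, hx⟩
  · simp
  have ht0 : t ≠ 0 := (zero_le.trans_lt (hE x hx)).ne'
  have hpos : ∀ n : ℕ, 0 < (n : ℝ≥0∞)⁻¹ := fun n => ENNReal.inv_pos.2 (ENNReal.natCast_ne_top n)
  set A : ℕ → Set X := fun n => {x ∈ E | fedSup μ S ζ (n : ℝ≥0∞)⁻¹ x ≤ t}
  have hA : Monotone A := fun m n hmn x hx =>
    ⟨hx.1, (fedSup_mono (ENNReal.inv_le_inv.2 (Nat.cast_le.2 hmn))).trans hx.2⟩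
  have hcover : E = ⋃ n, A n := by
    refine Subset.antisymm (fun x hx => ?_) (iUnion_subset fun n => sep_subset _ _)
    have := hE x hx
    rw [fedDensity_eq_iInf_fedSup_seq hpos ENNReal.tendsto_inv_nat_nhds_zero] at this
    obtain ⟨n, hn⟩ := iInf_lt_iff.1 this
    exact mem_iUnion.2 ⟨n, hx, hn.le⟩
  calc μ E = ⨆ n, μ (A n) := by
        conv_lhs => rw [hcover]
        exact hA.measure_iUnion
    _ ≤ t * psiM S ζ E := iSup_le fun n =>
      (measure_le_mul_psiM_of_fedSup_le ht0 ht (hpos n) fun _ hx => hx.2).trans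
        (by gcongr; exact sep_subset _ _)

end Federer

theorem ENNReal.le_tsum_of_forall_le_sum_add_mul_tsum_compl {ι : Type*} {f : ι → ℝ≥0∞}
    {a η : ℝ≥0∞} (hη : η ≠ ∞)
    (h : ∀ J : Finset ι, a ≤ ∑ i ∈ J, f i + η * ∑' i : {i // i ∉ J}, f i) :
    a ≤ ∑' i, f i := by
  rcases eq_or_ne (∑' i, f i) ∞ with hf | hf
  · exact hf ▸ le_top
  have hpartial : Tendsto (fun J : Finset ι => ∑ i ∈ J, f i) atTop (𝓝 (∑' i, f i)) :=
    ENNReal.summable.hasSum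
  have hlim := hpartial.add
    (ENNReal.Tendsto.const_mul (ENNReal.tendsto_tsum_compl_atTop_zero hf) (Or.inr hη))
  rw [mul_zero, add_zero] at hlim
  exact ge_of_tendsto' hlim h

section LowerEstimate

variable [MetricSpace X] [MeasurableSpace X] {μ : Measure X}
  {S : Set (Set X)} {ζ : Set X → ℝ≥0∞} {E V : Set X} {t : ℝ≥0∞}

theorem exists_disjoint_covering_of_lt_fedDensity [OpensMeasurableSpace X]
    (hS : ∀ T ∈ S, IsClosed T) (ht : t ≠ ∞) (hE : ∀ x ∈ E, t < fedDensity μ S ζ x)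
    (hV : IsOpen V) (hEV : E ⊆ V) (hμV : μ V ≠ ∞) {ρ : ℝ≥0∞} (hρ0 : 0 < ρ) (hρ : ρ ≠ ∞) :
    ∃ u : Set (Set X), u.Countable ∧ u.PairwiseDisjoint id ∧
      (∀ b ∈ u, b ∈ S ∧ b ⊆ V ∧ EMetric.diam b ≤ ρ ∧ t * ζ b < μ b) ∧
      ∀ J : Finset u, E ⊆ (⋃ b ∈ J, (b : Set X)) ∪ ⋃ b : {b : u // b ∉ J}, hatSet S b := by
  set Fam := {T | T ∈ adm μ S ζ ∧ T ⊆ V ∧ EMetric.diam T ≤ ρ ∧ t * ζ T < μ T}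
  obtain ⟨u, huFam, hudisj, hucov⟩ := Vitali.exists_disjoint_subfamily_covering_enlargement
    id Fam (fun T => (EMetric.diam T).toReal) 2 one_lt_two (fun _ _ => ENNReal.toReal_nonneg)
    ρ.toReal (fun _ hT => ENNReal.toReal_mono hρ hT.2.2.1)
    fun _ hT => nonempty_of_measure_ne_zero (zero_le.trans_lt hT.2.2.2).ne'
  have hu_meas : ∀ b ∈ u, MeasurableSet b := fun b hb => (hS b (huFam hb).1.1).measurableSet
  have hu_count : u.Countable := by
    have := Measure.countable_meas_pos_of_disjoint_of_meas_iUnion_ne_top₀ μ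
      (As := fun b : u => (b : Set X)) (fun b => (hu_meas b b.2).nullMeasurableSet)
      (fun b b' hbb' => (hudisj b.2 b'.2 (Subtype.coe_injective.ne hbb')).aedisjoint)
      (ne_top_of_le_ne_top hμV (measure_mono (iUnion_subset fun b => (huFam b.2).2.1)))
    rw [← countable_coe_iff, ← countable_univ_iff]
    exact this.mono fun b _ => zero_le.trans_lt (huFam b.2).2.2.2
  refine ⟨u, hu_count, hudisj, fun b hb => ⟨(huFam hb).1.1, (huFam hb).2⟩, fun J x hx => ?_⟩
  refine or_iff_not_imp_left.2 fun hxJ => ?_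
  have hN : V ∩ (⋃ b ∈ J, (b : Set X))ᶜ ∈ 𝓝 x :=
    (hV.inter (isClosed_biUnion_finset (s := J) (f := fun b : u => (b : Set X))
      fun b _ => hS b (huFam b.2).1.1).isOpen_compl).mem_nhds ⟨hEV hx, hxJ⟩
  obtain ⟨T, hTadm, hxT, hTN, hTρ, hQ⟩ := exists_adm_subset_of_lt_fedDensity (hE x hx) hN hρ0
  obtain ⟨b, hbu, ⟨y, hyT, hyb⟩, hTb⟩ := hucov T
    ⟨hTadm, fun z hz => (hTN hz).1, hTρ.le, mul_lt_of_lt_fedQuot hTadm ht hQ⟩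
  have hbJ : (⟨b, hbu⟩ : u) ∉ J := fun hbJ => (hTN hyT).2 (mem_biUnion hbJ hyb)
  have hTb' : EMetric.diam T ≤ 2 * EMetric.diam b := by
    have hb : EMetric.diam b ≠ ∞ := ((huFam hbu).2.2.1.trans_lt hρ.lt_top).ne
    refine (ENNReal.toReal_le_toReal (hTρ.trans hρ.lt_top).ne
      (ENNReal.mul_ne_top ENNReal.ofNat_ne_top hb)).1 ?_
    rwa [ENNReal.toReal_mul, ENNReal.toReal_ofNat]
  exact mem_iUnion.2 ⟨⟨⟨b, hbu⟩, hbJ⟩, T, ⟨hTadm.1, ⟨y, hyT, hyb⟩, hTb'⟩, hxT⟩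

local notation "pre" => OuterMeasure.mkMetric'.pre (sizeGauge S ζ)

theorem mul_pre_le_measure_of_lt_fedDensity [OpensMeasurableSpace X] (hS : ∀ T ∈ S, IsClosed T)
    (hd : DoublingSize S ζ) (ht : t ≠ ∞) (hE : ∀ x ∈ E, t < fedDensity μ S ζ x)
    (hV : IsOpen V) (hEV : E ⊆ V) (hμV : μ V ≠ ∞) {r : ℝ≥0∞} (hr : 0 < r) :
    t * pre r E ≤ μ V := by
  obtain ⟨cd, η, -, hcd, -, hη, hdbl⟩ := hd
  choose! enl henlS hhat henl_diam henl_size using hdbl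
  set ρ : ℝ≥0∞ := min 1 (min r (r / cd))
  have hρr : ρ ≤ r := (min_le_right _ _).trans (min_le_left _ _)
  have hcdρ : cd * ρ ≤ r :=
    (mul_le_mul_right ((min_le_right _ _).trans (min_le_right _ _)) cd).trans ENNReal.mul_div_le
  obtain ⟨u, hu_count, hudisj, hu, hcov⟩ := exists_disjoint_covering_of_lt_fedDensity hS ht hE hV
    hEV hμV (lt_min one_pos (lt_min hr (ENNReal.div_pos hr.ne' hcd.ne)))
    ((min_le_left _ _).trans_lt one_lt_top).ne
  have : Countable u := hu_count.to_subtype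
  have hpre_le : ∀ T ∈ S, EMetric.diam T ≤ r → pre r T ≤ ζ T := fun T hT hdT =>
    (OuterMeasure.mkMetric'.pre_le hdT).trans_eq (sizeGauge_of_mem hT)
  have hpre_enl : ∀ b ∈ u, pre r (hatSet S b) ≤ η * ζ b := fun b hb =>
    (measure_mono (hhat b (hu b hb).1)).trans <| (hpre_le _ (henlS b (hu b hb).1)
      ((henl_diam b (hu b hb).1).trans ((mul_le_mul_right (hu b hb).2.2.1 cd).trans hcdρ))).trans
        (henl_size b (hu b hb).1)
  have hsum : pre r E ≤ ∑' b : u, ζ b := by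
    refine ENNReal.le_tsum_of_forall_le_sum_add_mul_tsum_compl hη.ne fun J => ?_
    calc pre r E
        ≤ pre r ((⋃ b ∈ J, (b : Set X)) ∪ ⋃ b : {b : u // b ∉ J}, hatSet S b) :=
          measure_mono (hcov J)
      _ ≤ ∑ b ∈ J, pre r b + ∑' b : {b : u // b ∉ J}, pre r (hatSet S b) :=
        (measure_union_le _ _).trans
          (add_le_add (measure_biUnion_finset_le _ _) (measure_iUnion_le _))
      _ ≤ ∑ b ∈ J, ζ b + ∑' b : {b : u // b ∉ J}, η * ζ b := by
        gcongr with b _ b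
        · exact hpre_le b (hu b b.2).1 ((hu b b.2).2.2.1.trans hρr)
        · exact hpre_enl b b.1.2
      _ = ∑ b ∈ J, ζ b + η * ∑' b : {b : u // b ∉ J}, ζ b := by rw [ENNReal.tsum_mul_left]
  calc t * pre r E ≤ t * ∑' b : u, ζ b := by gcongr
    _ = ∑' b : u, t * ζ b := ENNReal.tsum_mul_left.symm
    _ ≤ ∑' b : u, μ b := ENNReal.tsum_le_tsum fun b => (hu b b.2).2.2.2.le
    _ = μ (⋃ b ∈ u, b) := (measure_biUnion hu_count hudisj fun b hb =>
      (hS b (hu b hb).1).measurableSet).symm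
    _ ≤ μ V := measure_mono (iUnion₂_subset fun b hb => (hu b hb).2.1)

theorem mul_psiM_le_measure_of_lt_fedDensity [BorelSpace X] [μ.OuterRegular]
    (hS : ∀ T ∈ S, IsClosed T) (hd : DoublingSize S ζ) (ht : t ≠ ∞) (hEm : MeasurableSet E)
    (hE : ∀ x ∈ E, t < fedDensity μ S ζ x) : t * psiM S ζ E ≤ μ E := by
  rw [Set.measure_eq_iInf_isOpen E μ]
  refine le_iInf₂ fun V hEV => le_iInf fun hV => ?_
  rcases eq_or_ne (μ V) ∞ with h | hμV
  · exact h ▸ le_top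
  rw [psiM_eq_mkMetric', Measure.mkMetric', toMeasure_apply _ _ hEm, OuterMeasure.mkMetric',
    OuterMeasure.iSup_apply, ENNReal.mul_iSup]
  refine iSup_le fun r => ?_
  rw [OuterMeasure.iSup_apply, ENNReal.mul_iSup]
  exact iSup_le fun hr => mul_pre_le_measure_of_lt_fedDensity hS hd ht hE hV hEV hμV hr

end LowerEstimate

section ClosedBalls

variable [MetricSpace X] {c : ℝ≥0∞} {α : ℝ}

theorem ediam_eq_ofReal_diam {s : Set X} (hs : Bornology.IsBounded s) :
    EMetric.diam s = ENNReal.ofReal (diam s) :=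
  (ENNReal.ofReal_toReal hs.ediam_ne_top).symm

theorem sizeDiam_ne_top (hα : 0 ≤ α) (hc : c ≠ ∞) {T : Set X} (hT : EMetric.diam T ≠ ∞) :
    sizeDiam c α T ≠ ∞ :=
  ENNReal.mul_ne_top hc (ENNReal.rpow_ne_top_of_nonneg hα hT)

theorem isClosed_of_mem_closedBallsF {T : Set X} (hT : T ∈ closedBallsF X) : IsClosed T := by
  obtain ⟨z, r, -, rfl⟩ := hT
  exact isClosed_closedBall

theorem closedBall_three_mul_diam_mem_closedBallsF {z : X} {r : ℝ} (hr : 0 < r) :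
    closedBall z (3 * diam (closedBall z r)) ∈ closedBallsF X := by
  rcases (diam_nonneg (s := closedBall z r)).lt_or_eq with hd | hd
  · exact ⟨z, _, by positivity, rfl⟩
  · refine ⟨z, r, hr, ?_⟩
    rw [← hd, mul_zero, closedBall_zero]
    refine (eq_singleton_iff_unique_mem.2 ⟨mem_closedBall_self hr.le, fun y hy => ?_⟩).symm
    exact dist_le_zero.1 (hd ▸ dist_le_diam_of_mem isBounded_closedBall hy
      (mem_closedBall_self hr.le))

theorem doublingSize_closedBallsF (hα : 0 ≤ α) :
    DoublingSize (closedBallsF X) (sizeDiam c α) := by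
  refine ⟨6, 6 ^ α, by norm_num, by norm_num, ENNReal.rpow_pos (by norm_num) (by norm_num),
    ENNReal.rpow_lt_top_of_nonneg hα (by norm_num), ?_⟩
  rintro _ ⟨z, r, hr, rfl⟩
  set d := diam (closedBall z r)
  have hdT : EMetric.diam (closedBall z r) = ENNReal.ofReal d :=
    ediam_eq_ofReal_diam isBounded_closedBall
  have hdiam : EMetric.diam (closedBall z (3 * d)) ≤ 6 * EMetric.diam (closedBall z r) := by
    rw [ediam_eq_ofReal_diam isBounded_closedBall, hdT, ← ENNReal.ofReal_ofNat,
      ← ENNReal.ofReal_mul (by norm_num)]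
    exact ENNReal.ofReal_le_ofReal ((diam_closedBall (by positivity)).trans_eq (by ring))
  -- Radius `3 d`, not `r + 2 d`: the radius of a ball may be much larger than its diameter.
  refine ⟨_, closedBall_three_mul_diam_mem_closedBallsF hr, ?_, hdiam, ?_⟩
  · rintro p ⟨U, ⟨-, ⟨y, hyU, hyT⟩, hU⟩, hpU⟩
    rw [mem_closedBall, ← edist_le_ofReal (by positivity)]
    calc edist p z ≤ edist p y + edist y z := edist_triangle _ _ _
      _ ≤ 2 * EMetric.diam (closedBall z r) + EMetric.diam (closedBall z r) :=
        add_le_add ((edist_le_ediam_of_mem hpU hyU).trans hU)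
          (edist_le_ediam_of_mem hyT (mem_closedBall_self hr.le))
      _ = ENNReal.ofReal (3 * d) := by
        rw [hdT, ENNReal.ofReal_mul (by norm_num), ENNReal.ofReal_ofNat]; ring
  · calc sizeDiam c α (closedBall z (3 * d))
        ≤ c * (6 * EMetric.diam (closedBall z r)) ^ α := by
          unfold sizeDiam; gcongr
      _ = 6 ^ α * sizeDiam c α (closedBall z r) := by
        rw [sizeDiam, ENNReal.mul_rpow_of_nonneg _ _ hα]; ring

end ClosedBalls

section Regularity

variable [MetricSpace X]

theorem tendsto_ediam_closedBall_nhdsGT {z : X} {s δ : ℝ} (hs : s ∈ Ioo 0 δ)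
    (hcont : ContinuousOn (fun t => diam (ball z t)) (Ioo 0 δ)) :
    Tendsto (fun r => EMetric.diam (closedBall z r)) (𝓝[>] s)
      (𝓝 (EMetric.diam (closedBall z s))) := by
  have hreal : Tendsto (fun r => diam (closedBall z r)) (𝓝[>] s)
      (𝓝 (diam (closedBall z s))) := by
    refine tendsto_order.2 ⟨fun a ha => eventually_nhdsWithin_of_forall fun r hr =>
      ha.trans_le (diam_mono (closedBall_subset_closedBall (le_of_lt hr)) isBounded_closedBall),
      fun b hb => ?_⟩
    have hball : diam (ball z s) < b :=
      (diam_mono ball_subset_closedBall isBounded_closedBall).trans_lt hb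
    obtain ⟨r', hr'b, hsr'⟩ := (((hcont.continuousAt (Ioo_mem_nhds hs.1 hs.2)).eventually
      (gt_mem_nhds hball)).filter_mono nhdsWithin_le_nhds |>.and
        (self_mem_nhdsWithin : Ioi s ∈ 𝓝[>] s)).exists
    filter_upwards [Ioo_mem_nhdsGT (show s < r' from hsr')] with r hr
    exact (diam_mono (closedBall_subset_ball hr.2) isBounded_ball).trans_lt hr'b
  simpa only [Function.comp_def, ediam_eq_ofReal_diam isBounded_closedBall] using
    (ENNReal.continuous_ofReal.tendsto _).comp hreal

theorem exists_closedBall_eq_of_ediam_ne_zero {T : Set X} (hT : T ∈ closedBallsF X)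
    (hd : EMetric.diam T ≠ 0) :
    ∃ z s, 0 < s ∧ T = closedBall z s ∧ ENNReal.ofReal s ≤ 2 * EMetric.diam T := by
  obtain ⟨z, r, hr, rfl⟩ := hT
  rw [ediam_eq_ofReal_diam isBounded_closedBall] at hd ⊢
  set d := diam (closedBall z r)
  have hd0 : 0 < d := ENNReal.ofReal_pos.1 (pos_iff_ne_zero.2 hd)
  rw [← ENNReal.ofReal_ofNat, ← ENNReal.ofReal_mul (by norm_num)]
  rcases le_or_gt r (2 * d) with hr2 | hr2
  · exact ⟨z, r, hr, rfl, ENNReal.ofReal_le_ofReal hr2⟩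
  refine ⟨z, 2 * d, by positivity, Subset.antisymm (fun w hw => ?_)
    (closedBall_subset_closedBall hr2.le), le_rfl⟩
  exact (dist_le_diam_of_mem isBounded_closedBall hw (mem_closedBall_self hr.le)).trans
    (by linarith)

end Regularity

section Density

variable [MetricSpace X] [MeasurableSpace X] {μ : Measure X} {c : ℝ≥0∞} {α : ℝ}

theorem ediam_ne_zero_of_mem_adm (hα : 0 < α) {S : Set (Set X)} {T : Set X} {x : X}
    (hT : T ∈ adm μ S (sizeDiam c α)) (hx : x ∈ T) (hμx : μ {x} = 0) : EMetric.diam T ≠ 0 :=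
  fun h0 => hT.2.1 ⟨by simp [sizeDiam, h0, ENNReal.zero_rpow_of_pos hα],
    measure_mono_null (fun _ hy => Metric.ediam_eq_zero_iff.1 h0 hy hx) hμx⟩

/-- An admissible ball through `x` is enlarged slightly, so that it contains a neighbourhood of
`x`; diametric regularity keeps its diameter, hence its quotient, almost unchanged. -/
theorem lowerSemicontinuousAt_fedSup (hα : 0 < α) (hc' : c ≠ ∞) {x : X} (hx : μ {x} = 0)
    {ε : ℝ≥0∞} (hreg : ∀ z s, 0 < s → x ∈ closedBall z s → ENNReal.ofReal s ≤ 2 * ε →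
      Tendsto (fun r => EMetric.diam (closedBall z r)) (𝓝[>] s)
        (𝓝 (EMetric.diam (closedBall z s)))) :
    LowerSemicontinuousAt (fedSup μ (closedBallsF X) (sizeDiam c α) ε) x := by
  intro t ht
  obtain ⟨T, hT, hxT, hdT, hQ⟩ := lt_fedSup_iff.1 ht
  have htop : t ≠ ∞ := hQ.ne_top
  obtain ⟨z, s, hs, rfl, hsT⟩ :=
    exists_closedBall_eq_of_ediam_ne_zero hT.1 (ediam_ne_zero_of_mem_adm hα hT hxT hx)
  have hμ := mul_lt_of_lt_fedQuot hT htop hQ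
  have hgauge : Tendsto (fun D : ℝ≥0∞ => t * (c * D ^ α)) (𝓝 (EMetric.diam (closedBall z s)))
      (𝓝 (t * sizeDiam c α (closedBall z s))) :=
    ENNReal.Tendsto.const_mul (ENNReal.Tendsto.const_mul
      (ENNReal.continuous_rpow_const.tendsto _) (Or.inr hc')) (Or.inr htop)
  obtain ⟨r, ⟨hrε, hrμ⟩, hsr⟩ := ((hreg z s hs hxT (hsT.trans (by gcongr))).eventually
    ((gt_mem_nhds hdT).and (hgauge.eventually (gt_mem_nhds hμ))) |>.and
      (self_mem_nhdsWithin : Ioi s ∈ 𝓝[>] s)).exists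
  have hsr : s < r := hsr
  have hrμ' : t * sizeDiam c α (closedBall z r) < μ (closedBall z r) :=
    hrμ.trans_le (measure_mono (closedBall_subset_closedBall hsr.le))
  have hζ := sizeDiam_ne_top hα.le hc' (isBounded_closedBall (x := z) (r := r)).ediam_ne_top
  filter_upwards [ball_mem_nhds x (sub_pos.2 hsr)] with y hy
  refine lt_fedSup_iff.2 ⟨closedBall z r, ⟨⟨z, r, hs.trans hsr, rfl⟩, ?_, ?_⟩, ?_, hrε,
    lt_fedQuot_of_mul_lt htop hζ hrμ'⟩
  · exact fun h => (zero_le.trans_lt hrμ').ne' h.2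
  · exact fun h => hζ h.1
  · exact mem_closedBall.2 ((dist_triangle y x z).trans_lt
      (by linarith [mem_ball.1 hy, mem_closedBall.1 hxT])).le

theorem measurable_fedDensity_closedBallsF [BorelSpace X] (hX : DiamRegular X) (hα : 0 < α)
    (hc' : c ≠ ∞) (hatoms : {x : X | 0 < μ {x}}.Countable) :
    Measurable (fedDensity μ (closedBallsF X) (sizeDiam c α)) := by
  refine measurable_of_locally_iInf_lowerSemicontinuousAt hatoms fun x₀ => ?_
  obtain ⟨δ, hδ, hcont⟩ := hX x₀ 1 one_pos
  set b : ℝ := min (δ / 4) 4⁻¹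
  set ε : ℕ → ℝ≥0∞ := fun k => min (ENNReal.ofReal b) (k : ℝ≥0∞)⁻¹
  have hε : Tendsto ε atTop (𝓝 0) := by
    simpa using tendsto_const_nhds.min ENNReal.tendsto_inv_nat_nhds_zero
  have hεpos : ∀ k, 0 < ε k := fun k => lt_min (ENNReal.ofReal_pos.2 (by positivity))
    (ENNReal.inv_pos.2 (ENNReal.natCast_ne_top k))
  refine ⟨ball x₀ 2⁻¹, isOpen_ball, mem_ball_self (by norm_num), fun k => fedSup μ _ _ (ε k),
    fun x _ => fedDensity_eq_iInf_fedSup_seq hεpos hε, fun k x ⟨hx, hxD⟩ =>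
      lowerSemicontinuousAt_fedSup hα hc' (not_lt.1 hxD |>.antisymm zero_le)
        fun z s hs hxzs hsε => ?_⟩
  have hsb : s ≤ 2 * b := by
    rw [← ENNReal.ofReal_le_ofReal_iff (by positivity), ENNReal.ofReal_mul zero_le_two,
      ENNReal.ofReal_ofNat]
    exact hsε.trans (by gcongr; exact min_le_left _ _)
  have hb₁ : b ≤ δ / 4 := min_le_left _ _
  have hb₂ : b ≤ 4⁻¹ := min_le_right _ _
  refine tendsto_ediam_closedBall_nhdsGT ⟨hs, by linarith⟩ (hcont z ?_)
  exact mem_closedBall.2 ((dist_triangle z x x₀).trans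
    (by linarith [mem_ball.1 hx, mem_closedBall.1 hxzs, dist_comm x z]))

end Density

section SigmaFiniteOpen

variable [MetricSpace X] [MeasurableSpace X] {μ : Measure X}

theorem SigmaFiniteOpen.sigmaFinite (h : SigmaFiniteOpen μ) : SigmaFinite μ := by
  obtain ⟨U, -, hU, hfin⟩ := h
  exact ⟨⟨⟨U, fun _ => mem_univ _, hfin, hU⟩⟩⟩

theorem SigmaFiniteOpen.outerRegular [BorelSpace X] (h : SigmaFiniteOpen μ) :
    μ.OuterRegular := by
  obtain ⟨U, hUo, hU, hfin⟩ := h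
  refine Measure.FiniteSpanningSetsIn.outerRegular ⟨U, fun n => ⟨hUo n, ?_⟩, hfin, hU⟩
  have : IsFiniteMeasure (μ.restrict (U n)) := ⟨by simpa using hfin n⟩
  infer_instance

end SigmaFiniteOpen

section DensityToIntegral

variable {Ω : Type*} [MeasurableSpace Ω] {μ ψ : Measure Ω} {f : Ω → ℝ≥0∞} {E : Set Ω}

theorem countable_setOf_measure_singleton_pos [MeasurableSingletonClass Ω] [SigmaFinite μ] :
    {x : Ω | 0 < μ {x}}.Countable :=
  Measure.countable_meas_pos_of_disjoint_iUnion (As := fun x : Ω => {x}) measurableSet_singleton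
    fun _ _ h => disjoint_singleton.2 h

theorem ENNReal.le_of_forall_one_lt_le_mul {a b : ℝ≥0∞}
    (h : ∀ v, 1 < v → v ≠ ∞ → a ≤ v * b) : a ≤ b := by
  refine ENNReal.le_of_forall_lt_one_mul_le fun w hw => ?_
  rcases eq_or_ne w 0 with rfl | hw0
  · simp
  have := h w⁻¹ (ENNReal.one_lt_inv.2 hw) (ENNReal.inv_ne_top.2 hw0)
  rwa [← ENNReal.div_eq_inv_mul, ENNReal.le_div_iff_mul_le (Or.inl hw0) (Or.inl hw.ne_top),
    mul_comm] at this

theorem measure_eq_zero_of_forall_le_mul (hψ : ψ E ≠ ∞)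
    (h : ∀ t, 0 < t → t ≠ ∞ → μ E ≤ t * ψ E) : μ E = 0 := by
  have hlim : Tendsto (fun t => t * ψ E) (𝓝[>] 0) (𝓝 0) := by
    have hid : Tendsto (fun t : ℝ≥0∞ => t) (𝓝[>] 0) (𝓝 0) :=
      tendsto_nhdsWithin_of_tendsto_nhds tendsto_id
    simpa using ENNReal.Tendsto.mul_const hid (Or.inr hψ)
  refine nonpos_iff_eq_zero.1 (ge_of_tendsto hlim ?_)
  filter_upwards [Ioo_mem_nhdsGT zero_lt_one] with t ht
  exact h t ht.1 (ht.2.trans ENNReal.one_lt_top).ne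

theorem measure_eq_top_mul_of_forall_natCast_mul_le (hac : ψ E = 0 → μ E = 0)
    (h : ∀ n : ℕ, n * ψ E ≤ μ E) : μ E = ∞ * ψ E := by
  rcases eq_or_ne (ψ E) 0 with h0 | h0
  · rw [h0, hac h0, mul_zero]
  refine le_antisymm (by rw [ENNReal.top_mul h0]; exact le_top) ?_
  rw [← ENNReal.iSup_natCast, ENNReal.iSup_mul]
  exact iSup_le h

theorem ENNReal.pairwise_disjoint_Ico_zpow {v : ℝ≥0∞} (hv : 1 ≤ v) :
    Pairwise (Function.onFun Disjoint fun k : ℤ => Ico (v ^ k) (v ^ (k + 1))) := by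
  refine fun k l hkl => disjoint_left.2 fun x hxk hxl => ?_
  rcases hkl.lt_or_gt with h | h
  · exact (hxk.2.trans_le (ENNReal.zpow_le_of_le hv (by omega))).not_ge hxl.1
  · exact (hxl.2.trans_le (ENNReal.zpow_le_of_le hv (by omega))).not_ge hxk.1

/-- Slicing `E` along the level sets `v ^ k ≤ f < v ^ (k + 1)`, `k ∈ ℤ`, compares `μ` with
`∫ f dψ` up to the factor `v`. -/
theorem measure_le_mul_setLIntegral_and_setLIntegral_le_mul (hf : Measurable f)
    (hE : MeasurableSet E) (hfE : ∀ x ∈ E, f x ≠ 0 ∧ f x ≠ ∞)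
    (hup : ∀ t ≠ ∞, ∀ F ⊆ E, MeasurableSet F → (∀ x ∈ F, f x < t) → μ F ≤ t * ψ F)
    (hlow : ∀ t ≠ ∞, ∀ F ⊆ E, MeasurableSet F → (∀ x ∈ F, t ≤ f x) → t * ψ F ≤ μ F)
    {v : ℝ≥0∞} (hv : 1 < v) (hvtop : v ≠ ∞) :
    μ E ≤ v * ∫⁻ x in E, f x ∂ψ ∧ ∫⁻ x in E, f x ∂ψ ≤ v * μ E := by
  have hv0 : v ≠ 0 := (zero_lt_one.trans hv).ne'
  have hpow : ∀ k : ℤ, v ^ (k + 1) = v * v ^ k := fun k => by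
    rw [ENNReal.zpow_add hv0 hvtop, zpow_one, mul_comm]
  set B : ℤ → Set Ω := fun k => E ∩ f ⁻¹' Ico (v ^ k) (v ^ (k + 1))
  have hBm : ∀ k, MeasurableSet (B k) := fun k => hE.inter (hf measurableSet_Ico)
  have hBdisj : Pairwise (Function.onFun Disjoint B) := fun k l hkl =>
    ((ENNReal.pairwise_disjoint_Ico_zpow hv.le hkl).preimage f).mono inter_subset_right
      inter_subset_right
  have hEB : E = ⋃ k, B k := Subset.antisymm (fun x hx => mem_iUnion.2
    ((ENNReal.exists_mem_Ico_zpow (hfE x hx).1 (hfE x hx).2 hv hvtop).imp fun _ hk => ⟨hx, hk⟩))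
    (iUnion_subset fun _ => inter_subset_left)
  have hμ : μ E = ∑' k, μ (B k) := by
    conv_lhs => rw [hEB]
    exact measure_iUnion hBdisj hBm
  have hI : ∫⁻ x in E, f x ∂ψ = ∑' k, ∫⁻ x in B k, f x ∂ψ := by
    conv_lhs => rw [hEB]
    exact lintegral_iUnion hBm hBdisj f
  have hlowB : ∀ k, v ^ k * ψ (B k) ≤ ∫⁻ x in B k, f x ∂ψ := fun k => by
    rw [← setLIntegral_const]
    exact setLIntegral_mono hf fun x hx => hx.2.1
  have hupB : ∀ k, ∫⁻ x in B k, f x ∂ψ ≤ v * (v ^ k * ψ (B k)) := fun k => by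
    rw [← mul_assoc, ← hpow, ← setLIntegral_const]
    exact setLIntegral_mono measurable_const fun x hx => hx.2.2.le
  rw [hμ, hI, ← ENNReal.tsum_mul_left, ← ENNReal.tsum_mul_left]
  refine ⟨ENNReal.tsum_le_tsum fun k => ?_, ENNReal.tsum_le_tsum fun k => (hupB k).trans ?_⟩
  · calc μ (B k) ≤ v ^ (k + 1) * ψ (B k) := hup _ (ENNReal.zpow_ne_top hv0 hvtop _) _
          inter_subset_left (hBm k) fun x hx => hx.2.2
      _ ≤ v * ∫⁻ x in B k, f x ∂ψ := by rw [hpow, mul_assoc]; gcongr; exact hlowB k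
  · gcongr
    exact hlow _ (ENNReal.zpow_ne_top hv0 hvtop _) _ inter_subset_left (hBm k) fun x hx => hx.2.1

theorem measure_eq_setLIntegral_of_forall_le_mul (hf : Measurable f) (hE : MeasurableSet E)
    (hfE : ∀ x ∈ E, f x ≠ 0 ∧ f x ≠ ∞)
    (hup : ∀ t ≠ ∞, ∀ F ⊆ E, MeasurableSet F → (∀ x ∈ F, f x < t) → μ F ≤ t * ψ F)
    (hlow : ∀ t ≠ ∞, ∀ F ⊆ E, MeasurableSet F → (∀ x ∈ F, t < f x) → t * ψ F ≤ μ F) :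
    μ E = ∫⁻ x in E, f x ∂ψ := by
  have hlow' : ∀ t ≠ ∞, ∀ F ⊆ E, MeasurableSet F → (∀ x ∈ F, t ≤ f x) → t * ψ F ≤ μ F :=
    fun _ _ F hFE hF h => ENNReal.mul_le_of_forall_lt fun a ha b hb =>
      (by gcongr : a * b ≤ a * ψ F).trans
        (hlow a ha.ne_top F hFE hF fun x hx => ha.trans_le (h x hx))
  have hslice := fun v (hv : 1 < v) hvtop =>
    measure_le_mul_setLIntegral_and_setLIntegral_le_mul hf hE hfE hup hlow' hv hvtop
  exact le_antisymm (ENNReal.le_of_forall_one_lt_le_mul fun v hv hvtop => (hslice v hv hvtop).1)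
    (ENNReal.le_of_forall_one_lt_le_mul fun v hv hvtop => (hslice v hv hvtop).2)

theorem measure_eq_setLIntegral_of_density_bounds (hf : Measurable f) (hE : MeasurableSet E)
    (hψE : ψ E ≠ ∞) (hac : ∀ F ⊆ E, MeasurableSet F → ψ F = 0 → μ F = 0)
    (hup : ∀ t ≠ ∞, ∀ F ⊆ E, MeasurableSet F → (∀ x ∈ F, f x < t) → μ F ≤ t * ψ F)
    (hlow : ∀ t ≠ ∞, ∀ F ⊆ E, MeasurableSet F → (∀ x ∈ F, t < f x) → t * ψ F ≤ μ F) :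
    μ E = ∫⁻ x in E, f x ∂ψ := by
  set Z := f ⁻¹' {0}
  set I := f ⁻¹' {∞}
  have hZ : MeasurableSet Z := hf (measurableSet_singleton 0)
  have hI : MeasurableSet I := hf (measurableSet_singleton ∞)
  have hsplit (ν : Measure Ω) : ν E = ν (E ∩ Z) + (ν ((E \ Z) ∩ I) + ν ((E \ Z) \ I)) := by
    rw [measure_inter_add_diff _ hI, measure_inter_add_diff _ hZ]
  rw [← withDensity_apply _ hE, hsplit μ, hsplit (ψ.withDensity f),
    withDensity_apply _ (hE.inter hZ), withDensity_apply _ ((hE.diff hZ).inter hI),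
    withDensity_apply _ ((hE.diff hZ).diff hI)]
  have hEZ : E ∩ Z ⊆ E := inter_subset_left
  have hEI : (E \ Z) ∩ I ⊆ E := inter_subset_left.trans diff_subset
  have hEP : (E \ Z) \ I ⊆ E := diff_subset.trans diff_subset
  congr 1
  · rw [setLIntegral_congr_fun (hE.inter hZ) fun x hx => hx.2, lintegral_zero]
    refine measure_eq_zero_of_forall_le_mul (ne_top_of_le_ne_top hψE (measure_mono hEZ))
      fun t ht htop => hup t htop _ hEZ (hE.inter hZ) fun x hx => ?_
    rwa [show f x = 0 from hx.2]
  congr 1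
  · rw [setLIntegral_congr_fun ((hE.diff hZ).inter hI) fun x hx => hx.2, setLIntegral_const]
    refine measure_eq_top_mul_of_forall_natCast_mul_le (hac _ hEI ((hE.diff hZ).inter hI))
      fun n => hlow n (ENNReal.natCast_ne_top n) _ hEI ((hE.diff hZ).inter hI) fun x hx => ?_
    rw [show f x = ∞ from hx.2]
    exact ENNReal.natCast_lt_top n
  · exact measure_eq_setLIntegral_of_forall_le_mul hf ((hE.diff hZ).diff hI)
      (fun x hx => ⟨hx.1.2, hx.2⟩) (fun t ht F hF => hup t ht F (hF.trans hEP))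
      fun t ht F hF => hlow t ht F (hF.trans hEP)

end DensityToIntegral

theorem stmt9_general [MetricSpace X] [MeasurableSpace X] [BorelSpace X]
    (hX : DiamRegular X)
    (α : ℝ) (hα : 0 < α) (c : ℝ≥0∞) (hc' : c < ∞)
    (μ : Measure X) (hσ : SigmaFiniteOpen μ)
    (A B : Set X) (hB : MeasurableSet B) (hBA : B ⊆ A) :
    Measurable (A.restrict (fedDensity μ (closedBallsF X) (sizeDiam c α))) ∧
    (psiM (closedBallsF X) (sizeDiam c α) A < ∞ →
      μ.restrict A ≪ (psiM (closedBallsF X) (sizeDiam c α)).restrict A →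
      μ B = ∫⁻ x in B, fedDensity μ (closedBallsF X) (sizeDiam c α) x
        ∂(psiM (closedBallsF X) (sizeDiam c α))) := by
  have := hσ.sigmaFinite
  have := hσ.outerRegular
  have hF := measurable_fedDensity_closedBallsF hX hα hc'.ne
    (countable_setOf_measure_singleton_pos (μ := μ))
  refine ⟨hF.comp measurable_subtype_coe, fun hψA hac => ?_⟩
  refine measure_eq_setLIntegral_of_density_bounds hF hB
    (ne_top_of_le_ne_top hψA.ne (measure_mono hBA)) (fun E hEB _ hψE => ?_)
    (fun t ht E _ _ hE => measure_le_mul_psiM_of_fedDensity_lt ht hE)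
    fun t ht E _ hEm hE => mul_psiM_le_measure_of_lt_fedDensity
      (fun _ => isClosed_of_mem_closedBallsF) (doublingSize_closedBallsF hα.le) ht hEm hE
  rw [← Measure.restrict_eq_self μ (hEB.trans hBA)]
  exact hac (by rwa [Measure.restrict_eq_self _ (hEB.trans hBA)])

/-- Spherical area formula. Let `X` be diametrically regular, `α > 0`,
`μ` Borel regular with a countable open cover by sets of finite measure, `B ⊆ A` Borel with
`S_{μ,ζ_{b,α}}` covering `A` finely. Then `θ^α(μ,·)` is Borel on `A`; and if `S^α(A) < ∞`
and `μ⌊A ≪ S^α⌊A`, then `μ(B) = ∫_B θ^α(μ,x) dS^α(x)`. -/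
theorem stmt9 [MetricSpace X] [MeasurableSpace X] [BorelSpace X]
    (hX : DiamRegular X)
    (α : ℝ) (hα : 0 < α) (c : ℝ≥0∞) (hc : 0 < c) (hc' : c < ∞)
    (μ : Measure X) (hreg : BorelRegular μ) (hσ : SigmaFiniteOpen μ)
    (A B : Set X) (hA : MeasurableSet A) (hB : MeasurableSet B) (hBA : B ⊆ A)
    (hfine : ∀ x ∈ A, Fine (adm μ (closedBallsF X) (sizeDiam c α)) x) :
    Measurable (A.restrict (fedDensity μ (closedBallsF X) (sizeDiam c α))) ∧
    (psiM (closedBallsF X) (sizeDiam c α) A < ∞ →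
      μ.restrict A ≪ (psiM (closedBallsF X) (sizeDiam c α)).restrict A →
      μ B = ∫⁻ x in B, fedDensity μ (closedBallsF X) (sizeDiam c α) x
        ∂(psiM (closedBallsF X) (sizeDiam c α))) :=
  stmt9_general hX α hα c hc' μ hσ A B hB hBA
end
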